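/- If T is a rooted tree that does not consist only of the root, then every eigenvalue of the ancestral matrix C(T) is greater than or equal to 1. -/
import Mathlib


open Matrix

/-- A rooted tree on a finite vertex type `V`, encoded by its root and the
parent function: the root is its own parent, and iterating the parent function
from any vertex eventually reaches the root.  (These conditions force the graph
whose edges join each non-root vertex to its parent to be a tree.) -/
structure TreeOn (V : Type) [Fintype V] [DecidableEq V] where
  root : V
  parent : V → V
  parent_root : parent root = root
  reaches : ∀ v, ∃ k, parent^[k] v = root

namespace TreeOn

variable {V : Type} [Fintype V] [DecidableEq V]

/-- `u` is a (weak) ancestor of `v`: some iterate of the parent function sends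
`v` to `u`.  (Any ancestor is reached within `Fintype.card V` steps, so the
bound makes the predicate decidable without changing its meaning.) -/
def IsAncestor (T : TreeOn V) (u v : V) : Prop :=
  ∃ k, k ≤ Fintype.card V ∧ T.parent^[k] v = u

instance (T : TreeOn V) (u v : V) : Decidable (T.IsAncestor u v) := by
  have h : T.IsAncestor u v ↔ ∃ k ∈ Finset.range (Fintype.card V + 1), T.parent^[k] v = u := by
    simp [IsAncestor, Nat.lt_succ_iff]
  rw [h]; infer_instance

/-- The level of a vertex: its distance to the root. -/
def level (T : TreeOn V) (v : V) : ℕ := Nat.find (T.reaches v)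

/-- The ancestral level `ℓ(v ∨ w)`: the level of the lowest common ancestor
of `v` and `w`, i.e. the greatest level of a common ancestor. -/
def lcaLevel (T : TreeOn V) (v w : V) : ℕ :=
  (Finset.univ.filter fun u => T.IsAncestor u v ∧ T.IsAncestor u w).sup T.level

/-- A leaf is a vertex with no children. -/
def IsLeaf (T : TreeOn V) (v : V) : Prop := ∀ u, T.parent u = v → u = v

instance (T : TreeOn V) : DecidablePred T.IsLeaf := fun v =>
  inferInstanceAs (Decidable (∀ u, T.parent u = v → u = v))

/-- The type of leaves of `T`. -/
abbrev Leaf (T : TreeOn V) := {v : V // T.IsLeaf v}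

/-- The ancestral matrix `C(T)`, indexed by the leaves of `T`, whose
`(v, w)` entry is the ancestral level `ℓ(v ∨ w)`. -/
noncomputable def ancMatrix (T : TreeOn V) : Matrix T.Leaf T.Leaf ℝ :=
  Matrix.of fun v w => (T.lcaLevel v.1 w.1 : ℝ)

/-- The ancestral spectral radius `ρ_C(T)`: the largest eigenvalue of `C(T)`. -/
noncomputable def rhoC (T : TreeOn V) : ℝ :=
  sSup {μ : ℝ | ∃ x : T.Leaf → ℝ, x ≠ 0 ∧ T.ancMatrix.mulVec x = μ • x}

/-- The underlying simple graph of the tree: each non-root vertex is joined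
to its parent. -/
def graph (T : TreeOn V) : SimpleGraph V :=
  SimpleGraph.fromRel fun u v => T.parent u = v ∧ u ≠ v

/-- The number of children (outdegree) of a vertex. -/
def childCount (T : TreeOn V) (v : V) : ℕ :=
  (Finset.univ.filter fun u => T.parent u = v ∧ u ≠ v).card

end TreeOn

namespace TreeOn

variable {V : Type} [Fintype V] [DecidableEq V] (T : TreeOn V)

lemma iterate_root' (k : ℕ) : T.parent^[k] T.root = T.root := by
  induction k with
  | zero => rfl
  | succ n ih => rw [Function.iterate_succ_apply', ih, T.parent_root]

lemma iterate_level' (v : V) : T.parent^[T.level v] v = T.root := Nat.find_spec (T.reaches v)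

lemma iterate_eq_root_of_le' {v : V} {k : ℕ} (h : T.level v ≤ k) :
    T.parent^[k] v = T.root := by
  rw [← Nat.sub_add_cancel h, Function.iterate_add_apply, iterate_level', iterate_root']

lemma iterate_inj_aux' {v : V} {i j : ℕ} (hij : i ≤ j) (hj : j ≤ T.level v)
    (h : T.parent^[i] v = T.parent^[j] v) : i = j := by
  by_contra hne
  have hlt : i < j := lt_of_le_of_ne hij hne
  have hroot : T.parent^[T.level v - j + i] v = T.root := by
    rw [Function.iterate_add_apply, h, ← Function.iterate_add_apply, Nat.sub_add_cancel hj]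
    exact T.iterate_level' v
  exact absurd hroot (Nat.find_min (T.reaches v) (show T.level v - j + i < T.level v by omega))

lemma iterate_inj' {v : V} {i j : ℕ} (hi : i ≤ T.level v) (hj : j ≤ T.level v)
    (h : T.parent^[i] v = T.parent^[j] v) : i = j := by
  rcases le_total i j with h' | h'
  · exact T.iterate_inj_aux' h' hj h
  · exact (T.iterate_inj_aux' h' hi h.symm).symm

lemma level_lt_card' (v : V) : T.level v < Fintype.card V := by
  have hinj : Function.Injective (fun i : Fin (T.level v + 1) => T.parent^[(i : ℕ)] v) := by
    intro i j h
    exact Fin.ext (T.iterate_inj' (Nat.lt_succ_iff.mp i.2) (Nat.lt_succ_iff.mp j.2) h)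
  have := Fintype.card_le_of_injective _ hinj
  simpa using this

lemma isAncestor_iff' {u v : V} : T.IsAncestor u v ↔ ∃ k, T.parent^[k] v = u := by
  constructor
  · rintro ⟨k, -, h⟩; exact ⟨k, h⟩
  · rintro ⟨k, h⟩
    rcases le_or_gt k (T.level v) with hk | hk
    · exact ⟨k, hk.trans (T.level_lt_card' v).le, h⟩
    · have hu : u = T.root := by rw [← h, T.iterate_eq_root_of_le' hk.le]
      exact ⟨T.level v, (T.level_lt_card' v).le, by rw [T.iterate_level', hu]⟩

lemma isAncestor_self' (v : V) : T.IsAncestor v v := T.isAncestor_iff'.2 ⟨0, rfl⟩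

lemma isAncestor_root' (v : V) : T.IsAncestor T.root v :=
  T.isAncestor_iff'.2 ⟨T.level v, T.iterate_level' v⟩

lemma isAncestor_iterate' {u v : V} (h : T.IsAncestor u v) (j : ℕ) :
    T.IsAncestor (T.parent^[j] u) v := by
  obtain ⟨k, hk⟩ := T.isAncestor_iff'.1 h
  exact T.isAncestor_iff'.2 ⟨j + k, by rw [Function.iterate_add_apply, hk]⟩

lemma eq_of_isAncestor_of_isLeaf' {u v : V} (hu : T.IsLeaf u) (h : T.IsAncestor u v) :
    v = u := by
  obtain ⟨k, hk⟩ := T.isAncestor_iff'.1 h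
  induction k generalizing v with
  | zero => exact hk
  | succ n ih =>
    rw [Function.iterate_succ_apply'] at hk
    exact ih h (hu _ hk)

lemma level_iterate' {v : V} {k : ℕ} (hk : k ≤ T.level v) :
    T.level (T.parent^[k] v) = T.level v - k := by
  have h1 : T.level (T.parent^[k] v) ≤ T.level v - k :=
    Nat.find_le (by rw [← Function.iterate_add_apply, Nat.sub_add_cancel hk]
                    exact T.iterate_level' v)
  have h2 : T.level v ≤ T.level (T.parent^[k] v) + k :=
    Nat.find_min' (T.reaches v)
      (by rw [Function.iterate_add_apply]; exact T.iterate_level' _)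
  omega

lemma level_eq_zero' {v : V} : T.level v = 0 ↔ v = T.root := by
  rw [level, Nat.find_eq_zero]
  simp

end TreeOn

namespace TreeOn

variable {V : Type} [Fintype V] [DecidableEq V] (T : TreeOn V)

lemma lcaLevel_eq_card' (v w : V) :
    T.lcaLevel v w =
      (Finset.univ.filter fun u => u ≠ T.root ∧ T.IsAncestor u v ∧ T.IsAncestor u w).card := by
  classical
  set L := T.level v with hL
  set g : ℕ → V := fun k => T.parent^[k] v with hg
  set K : Finset ℕ := (Finset.range (L + 1)).filter (fun k => T.IsAncestor (g k) w) with hK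
  have hgL : g L = T.root := T.iterate_level' v
  have hLK : L ∈ K := by
    simp only [hK, Finset.mem_filter, Finset.mem_range]
    exact ⟨Nat.lt_succ_self L, by rw [hgL]; exact T.isAncestor_root' w⟩
  have hKne : K.Nonempty := ⟨L, hLK⟩
  set m : ℕ := K.min' hKne with hm
  have hmK : m ∈ K := K.min'_mem hKne
  have hmL : m ≤ L := by
    have := (Finset.mem_filter.1 hmK).1
    simpa [Nat.lt_succ_iff] using Finset.mem_range.1 this
  -- K is exactly Icc m L
  have hKIcc : K = Finset.Icc m L := by
    ext k
    simp only [hK, Finset.mem_filter, Finset.mem_range, Finset.mem_Icc, Nat.lt_succ_iff]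
    constructor
    · intro ⟨h1, h2⟩
      exact ⟨K.min'_le k (by simp [hK, Finset.mem_filter, Finset.mem_range, Nat.lt_succ_iff, h1, h2]), h1⟩
    · intro ⟨h1, h2⟩
      refine ⟨h2, ?_⟩
      have hanc : T.IsAncestor (g m) w := (Finset.mem_filter.1 hmK).2
      have : g k = T.parent^[k - m] (g m) := by
        rw [hg]; simp only
        rw [← Function.iterate_add_apply, Nat.sub_add_cancel h1]
      rw [this]
      exact T.isAncestor_iterate' hanc (k - m)
  -- level of g k
  have hlev : ∀ k ≤ L, T.level (g k) = L - k := fun k hk => T.level_iterate' hk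
  -- g k = root iff k = L, for k ≤ L
  have hgroot : ∀ k ≤ L, (g k = T.root ↔ k = L) := by
    intro k hk
    constructor
    · intro h
      have := hlev k hk
      rw [h, T.level_eq_zero'.2 rfl] at this
      omega
    · intro h; rw [h, hgL]
  -- the set of common ancestors
  have hS : (Finset.univ.filter fun u => T.IsAncestor u v ∧ T.IsAncestor u w)
      = K.image g := by
    ext u
    simp only [Finset.mem_filter, Finset.mem_univ, true_and, Finset.mem_image]
    constructor
    · rintro ⟨⟨k, -, hk⟩, hw⟩
      rcases le_or_gt k L with h | h
      · exact ⟨k, by simp [hK, Finset.mem_filter, Finset.mem_range, Nat.lt_succ_iff, h, hg, hk, hw], hk⟩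
      · have : u = T.root := by rw [← hk]; exact T.iterate_eq_root_of_le' h.le
        exact ⟨L, hLK, by rw [hgL, this]⟩
    · rintro ⟨k, hk, rfl⟩
      have hkL : k ≤ L := by
        have := (Finset.mem_filter.1 hk).1
        simpa [Nat.lt_succ_iff] using Finset.mem_range.1 this
      exact ⟨T.isAncestor_iff'.2 ⟨k, rfl⟩, (Finset.mem_filter.1 hk).2⟩
  have hginj : Set.InjOn g K := by
    intro a ha b hb hab
    rw [hKIcc, Finset.coe_Icc, Set.mem_Icc] at ha hb
    exact T.iterate_inj' ha.2 hb.2 hab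
  -- compute lcaLevel
  have hlca : T.lcaLevel v w = L - m := by
    rw [lcaLevel]
    apply le_antisymm
    · apply Finset.sup_le
      intro u hu
      rw [hS, Finset.mem_image] at hu
      obtain ⟨k, hk, rfl⟩ := hu
      rw [hKIcc, Finset.mem_Icc] at hk
      rw [hlev k hk.2]
      omega
    · have : g m ∈ Finset.univ.filter fun u => T.IsAncestor u v ∧ T.IsAncestor u w := by
        rw [hS]; exact Finset.mem_image_of_mem g hmK
      calc L - m = T.level (g m) := (hlev m hmL).symm
        _ ≤ _ := Finset.le_sup this
  -- compute the card
  have hS' : (Finset.univ.filter fun u => u ≠ T.root ∧ T.IsAncestor u v ∧ T.IsAncestor u w)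
      = (K.erase L).image g := by
    ext u
    simp only [Finset.mem_filter, Finset.mem_univ, true_and, Finset.mem_image,
      Finset.mem_erase]
    constructor
    · rintro ⟨hroot, hanc⟩
      have : u ∈ K.image g := by
        rw [← hS]; simp only [Finset.mem_filter, Finset.mem_univ, true_and]; exact hanc
      obtain ⟨k, hk, rfl⟩ := Finset.mem_image.1 this
      have hkL : k ≤ L := by
        rw [hKIcc, Finset.mem_Icc] at hk; exact hk.2
      exact ⟨k, ⟨fun h => hroot ((hgroot k hkL).2 h), hk⟩, rfl⟩
    · rintro ⟨k, ⟨hkL', hk⟩, rfl⟩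
      have hkL : k ≤ L := by
        rw [hKIcc, Finset.mem_Icc] at hk; exact hk.2
      refine ⟨fun h => hkL' ((hgroot k hkL).1 h), ?_, (Finset.mem_filter.1 hk).2⟩
      exact T.isAncestor_iff'.2 ⟨k, rfl⟩
  rw [hlca, hS', Finset.card_image_of_injOn (hginj.mono (by
    intro a ha; exact Finset.mem_coe.2 (Finset.mem_of_mem_erase (Finset.mem_coe.1 ha))))]
  rw [hKIcc]
  rw [Finset.Icc_erase_right]
  rw [Nat.card_Ico]
end TreeOn

namespace TreeOn

variable {V : Type} [Fintype V] [DecidableEq V] (T : TreeOn V)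

lemma root_not_isLeaf' (hT : ∃ v, v ≠ T.root) : ¬ T.IsLeaf T.root := by
  obtain ⟨v, hv⟩ := hT
  intro hleaf
  have hpos : 0 < T.level v := by
    rcases Nat.eq_zero_or_pos (T.level v) with h | h
    · exact absurd (T.level_eq_zero'.1 h) hv
    · exact h
  set u := T.parent^[T.level v - 1] v with hu
  have hpu : T.parent u = T.root := by
    have h' : T.parent^[T.level v - 1 + 1] v = T.root := by
      rw [Nat.sub_add_cancel hpos]; exact T.iterate_level' v
    rw [Function.iterate_succ_apply'] at h'
    rw [hu]; exact h'
  have hune : u ≠ T.root := by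
    intro h
    exact absurd h (Nat.find_min (T.reaches v) (show T.level v - 1 < T.level v by omega))
  exact hune (hleaf u hpu)

lemma leaf_ne_root' (hT : ∃ v, v ≠ T.root) (v : T.Leaf) : v.1 ≠ T.root := by
  intro h
  exact T.root_not_isLeaf' hT (h ▸ v.2)

end TreeOn

/-- If a rooted tree `T` does not consist only of the root,
then every eigenvalue of the ancestral matrix `C(T)` is at least `1`. -/
theorem one_le_eigenvalue_ancMatrix
    {V : Type} [Fintype V] [DecidableEq V] (T : TreeOn V)
    (hT : ∃ v, v ≠ T.root) (mu : ℝ) (x : T.Leaf → ℝ) (hx : x ≠ 0)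
    (hev : T.ancMatrix.mulVec x = mu • x) :
    1 ≤ mu := by
  classical
  set R : Finset V := Finset.univ.filter (· ≠ T.root) with hR
  set F : V → ℝ := fun u => ∑ v : T.Leaf, if T.IsAncestor u v.1 then x v else 0 with hF
  -- entrywise expansion of the matrix
  have hlca : ∀ v w : T.Leaf, (T.lcaLevel v.1 w.1 : ℝ)
      = ∑ u ∈ R, (if T.IsAncestor u v.1 then (1:ℝ) else 0) * (if T.IsAncestor u w.1 then (1:ℝ) else 0) := by
    intro v w
    rw [T.lcaLevel_eq_card' v.1 w.1]
    rw [show (Finset.univ.filter fun u => u ≠ T.root ∧ T.IsAncestor u v.1 ∧ T.IsAncestor u w.1)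
        = R.filter (fun u => T.IsAncestor u v.1 ∧ T.IsAncestor u w.1) by
      rw [hR, Finset.filter_filter]]
    rw [Finset.card_filter]
    push_cast
    apply Finset.sum_congr rfl
    intro u _
    split_ifs with h1 h2 h3 <;> simp_all
  -- quadratic form identity
  have hquad : ∑ v : T.Leaf, x v * (T.ancMatrix.mulVec x) v = ∑ u ∈ R, F u * F u := by
    have step1 : ∀ v : T.Leaf, x v * (T.ancMatrix.mulVec x) v
        = ∑ w : T.Leaf, ∑ u ∈ R, (if T.IsAncestor u v.1 then x v else 0) * (if T.IsAncestor u w.1 then x w else 0) := by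
      intro v
      rw [Matrix.mulVec, dotProduct, Finset.mul_sum]
      apply Finset.sum_congr rfl
      intro w _
      rw [show T.ancMatrix v w = (T.lcaLevel v.1 w.1 : ℝ) from rfl, hlca v w, Finset.sum_mul,
        Finset.mul_sum]
      apply Finset.sum_congr rfl
      intro u _
      split_ifs <;> ring
    calc ∑ v : T.Leaf, x v * (T.ancMatrix.mulVec x) v
        = ∑ v : T.Leaf, ∑ w : T.Leaf, ∑ u ∈ R,
            (if T.IsAncestor u v.1 then x v else 0) * (if T.IsAncestor u w.1 then x w else 0) :=
          Finset.sum_congr rfl fun v _ => step1 v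
      _ = ∑ v : T.Leaf, ∑ u ∈ R, ∑ w : T.Leaf,
            (if T.IsAncestor u v.1 then x v else 0) * (if T.IsAncestor u w.1 then x w else 0) :=
          Finset.sum_congr rfl fun v _ => Finset.sum_comm
      _ = ∑ u ∈ R, ∑ v : T.Leaf, ∑ w : T.Leaf,
            (if T.IsAncestor u v.1 then x v else 0) * (if T.IsAncestor u w.1 then x w else 0) :=
          Finset.sum_comm
      _ = ∑ u ∈ R, F u * F u := by
          apply Finset.sum_congr rfl
          intro u _
          rw [hF]
          simp only
          rw [Finset.sum_mul_sum]
  -- F at a leaf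
  have hFleaf : ∀ v : T.Leaf, F v.1 = x v := by
    intro v
    rw [hF]
    simp only
    rw [show (fun w : T.Leaf => if T.IsAncestor v.1 w.1 then x w else 0)
        = fun w : T.Leaf => if w = v then x w else 0 by
      funext w
      congr 1
      simp only [eq_iff_iff]
      constructor
      · intro h; exact Subtype.ext (T.eq_of_isAncestor_of_isLeaf' v.2 h)
      · intro h; rw [h]; exact T.isAncestor_self' v.1]
    simp
  -- lower bound on the quadratic form
  have hge : ∑ u ∈ R, F u * F u ≥ ∑ v : T.Leaf, x v * x v := by
    have h1 : ∑ v : T.Leaf, x v * x v = ∑ u ∈ Finset.univ.filter T.IsLeaf, F u * F u := by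
      rw [Finset.sum_subtype (p := T.IsLeaf) (Finset.univ.filter T.IsLeaf)
        (fun u => by simp) (fun u => F u * F u)]
      symm
      apply Finset.sum_congr rfl
      intro v _
      rw [hFleaf v]
    have h2 : Finset.univ.filter T.IsLeaf ⊆ R := by
      intro u hu
      simp only [Finset.mem_filter, Finset.mem_univ, true_and] at hu ⊢
      rw [hR]
      simp only [Finset.mem_filter, Finset.mem_univ, true_and]
      exact T.leaf_ne_root' hT ⟨u, hu⟩
    rw [h1]
    exact Finset.sum_le_sum_of_subset_of_nonneg h2 (fun u _ _ => mul_self_nonneg _)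
  -- conclude
  have hxx : 0 < ∑ v : T.Leaf, x v * x v := by
    obtain ⟨v0, hv0⟩ := Function.ne_iff.1 hx
    exact Finset.sum_pos' (fun v _ => mul_self_nonneg _)
      ⟨v0, Finset.mem_univ _, mul_self_pos.2 hv0⟩
  have hmu : ∑ v : T.Leaf, x v * (T.ancMatrix.mulVec x) v = mu * ∑ v : T.Leaf, x v * x v := by
    rw [hev]
    rw [Finset.mul_sum]
    apply Finset.sum_congr rfl
    intro v _
    simp [Pi.smul_apply, smul_eq_mul]
    ring
  nlinarith [hquad, hge, hxx, hmu]
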